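/- Let n be even and let u_1,…,u_n ∈ ℝ³ be a support system for a closed n-gon with edge vectors v_1,…,v_n. Then for every nonzero real α, the vectors u'_1,…,u'_n defined by u'_i = α·u_i for even i and u'_i = u_i/α for odd i also form a support system for the same polygon. In particular a regular polygon with an even number of edges has infinitely many support systems. -/

import Mathlib

open Matrix

/-!
Scaling `u i` by `c i` scales `u i ⨯₃ u (i + 1)` by `c i * c (i + 1)`, so weights with
`c i * c (i + 1) = 1` all around the cycle preserve support systems. For even `n` the weights
alternating between `α` and `α⁻¹` close up consistently around the cycle. Distinct `α` give
distinct systems as soon as some `u i` is nonzero; if all `u i` vanish then `v = 0`, and every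
constant family is a support system.
-/

def IsSupportSystem {R : Type*} [CommRing R] {n : ℕ} [NeZero n] (v u : Fin n → Fin 3 → R) :
    Prop :=
  ∀ i, u i ⨯₃ u (i + 1) = v (i + 1)

theorem smul_cross_smul {R : Type*} [CommRing R] (a b : R) (x y : Fin 3 → R) :
    (a • x) ⨯₃ (b • y) = (a * b) • (x ⨯₃ y) := by
  rw [LinearMap.map_smul₂, map_smul, smul_smul]

theorem Fin.val_add_one_mod_two {n : ℕ} [NeZero n] (hn : Even n) (i : Fin n) :
    (i + 1).val % 2 = (i.val + 1) % 2 := by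
  rw [Fin.val_add, Fin.val_one', Nat.mod_mod_of_dvd _ hn.two_dvd, Nat.add_mod,
    Nat.mod_mod_of_dvd _ hn.two_dvd, ← Nat.add_mod]

namespace IsSupportSystem

variable {R : Type*} [CommRing R] {n : ℕ} [NeZero n] {v u : Fin n → Fin 3 → R}

theorem smul {c : Fin n → R} (hu : IsSupportSystem v u) (hc : ∀ i, c i * c (i + 1) = 1) :
    IsSupportSystem v fun i => c i • u i := fun i => by
  rw [smul_cross_smul, hc, one_smul, hu]

theorem const_of_eq_zero (hv : v = 0) (x : Fin 3 → R) : IsSupportSystem v fun _ => x :=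
  fun _ => by rw [cross_self, hv, Pi.zero_apply]

theorem eq_zero_of_forall_eq_zero (hu : IsSupportSystem v u) (h : ∀ i, u i = 0) : v = 0 := by
  funext j
  obtain ⟨i, rfl⟩ : ∃ i, i + 1 = j := ⟨j - 1, sub_add_cancel j 1⟩
  rw [← hu i, h, map_zero, LinearMap.zero_apply, Pi.zero_apply]

end IsSupportSystem

section AlternatingWeight

variable {K : Type*} [Field K] {n : ℕ}

def alternatingWeight (β : K) (i : Fin n) : K :=
  if i.val % 2 = 1 then β else β⁻¹

theorem alternatingWeight_mul_succ [NeZero n] (hn : Even n) {β : K} (hβ : β ≠ 0) (i : Fin n) :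
    alternatingWeight β i * alternatingWeight β (i + 1) = 1 := by
  unfold alternatingWeight
  rw [Fin.val_add_one_mod_two hn]
  rcases Nat.mod_two_eq_zero_or_one i.val with h | h <;>
    simp [h, Nat.add_mod, hβ]

theorem alternatingWeight_injective (i : Fin n) :
    Function.Injective fun β : K => alternatingWeight β i := by
  unfold alternatingWeight
  split_ifs
  exacts [Function.injective_id, inv_injective]

variable [NeZero n] {v u : Fin n → Fin 3 → K}

theorem IsSupportSystem.alternatingWeight_smul (hn : Even n) (hu : IsSupportSystem v u)
    {β : K} (hβ : β ≠ 0) : IsSupportSystem v fun i => alternatingWeight β i • u i :=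
  hu.smul (alternatingWeight_mul_succ hn hβ)

theorem IsSupportSystem.infinite_setOf [Infinite K] (hn : Even n) (hu : IsSupportSystem v u)
    {j : Fin n} (hj : u j ≠ 0) : {w | IsSupportSystem v w}.Infinite := by
  refine Set.infinite_of_injOn_mapsTo (s := ({0}ᶜ : Set K))
    (f := fun β i => alternatingWeight β i • u i) ?_ ?_
    (Set.finite_singleton 0).infinite_compl
  · intro β _ γ _ h
    exact alternatingWeight_injective j (smul_left_injective K hj (congrFun h j))
  · intro β hβ
    exact hu.alternatingWeight_smul hn (Set.mem_compl_singleton_iff.mp hβ)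

end AlternatingWeight

theorem even_polygon_rescaled_support_general (n : ℕ) (hn : Even n) [NeZero n]
    (v : Fin n → Fin 3 → ℝ)
    (u : Fin n → Fin 3 → ℝ)
    (hu : ∀ i, u i ⨯₃ u (i + 1) = v (i + 1))
    (α : ℝ) (hα : α ≠ 0)
    (u' : Fin n → Fin 3 → ℝ)
    (hu' : ∀ i : Fin n, u' i = if i.val % 2 = 1 then α • u i else α⁻¹ • u i) :
    (∀ i, u' i ⨯₃ u' (i + 1) = v (i + 1)) ∧
      {w : Fin n → Fin 3 → ℝ | ∀ i, w i ⨯₃ w (i + 1) = v (i + 1)}.Infinite := by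
  have hu : IsSupportSystem v u := hu
  have hu'_eq : u' = fun i => alternatingWeight α i • u i := by
    funext i
    rw [hu' i, alternatingWeight, ite_smul]
  refine ⟨hu'_eq ▸ hu.alternatingWeight_smul hn hα, ?_⟩
  by_cases hu0 : ∀ i, u i = 0
  · have hconst := IsSupportSystem.const_of_eq_zero (hu.eq_zero_of_forall_eq_zero hu0)
      (Pi.single 0 1)
    exact hconst.infinite_setOf hn (j := 0) (by simp)
  · obtain ⟨j, hj⟩ := not_forall.mp hu0
    exact hu.infinite_setOf hn hj

/-- Let `n` be even and `u` a support system for a closed `n`-gon with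
edge vectors `v` (indices mod `n`; `v i` (0-based) is the paper's `v_{i+1}`).  For any
nonzero real `α`, the rescaled vectors `u' i = α • u i` for even (1-based) index, i.e.
`i.val % 2 = 1` in 0-based indexing, and `u' i = α⁻¹ • u i` for odd (1-based) index,
again form a support system for the same polygon.  In particular the set of support
systems is infinite. -/
theorem even_polygon_rescaled_support (n : ℕ) (hn : Even n) [NeZero n]
    (v : Fin n → Fin 3 → ℝ)
    (hclosed : ∑ i, v i = 0)
    (u : Fin n → Fin 3 → ℝ)
    (hu : ∀ i, u i ⨯₃ u (i + 1) = v (i + 1))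
    (α : ℝ) (hα : α ≠ 0)
    (u' : Fin n → Fin 3 → ℝ)
    (hu' : ∀ i : Fin n, u' i = if i.val % 2 = 1 then α • u i else α⁻¹ • u i) :
    (∀ i, u' i ⨯₃ u' (i + 1) = v (i + 1)) ∧
      {w : Fin n → Fin 3 → ℝ | ∀ i, w i ⨯₃ w (i + 1) = v (i + 1)}.Infinite :=
  even_polygon_rescaled_support_general n hn v u hu α hα u' hu'
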